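/- arXiv:1111.1073 — 2 statements merged into one kernel-verified Lean document; each statement's English description precedes it below -/
import Mathlib

section
/- Let G = {z ∈ ℂ : Im z > 0, −1/2 ≤ Re z < 1/2, |z| ≥ 1} and let τ ∈ G, with L_τ = {m + k·τ : m, k ∈ ℤ}. There exist g ∈ ℂ and λ ∈ ℂ such that g ∉ L_τ, 5·g ∈ L_τ, and λ·L_τ = L_τ + ℤ·g (i.e. the elliptic curve E = ℂ/L_τ admits a cyclic subgroup C of order 5 with E/C ≅ E) if and only if τ² = −1, or τ² = −4, or τ² = −5, or τ² = −τ − 3, or τ² = −τ − 5, or τ² = −τ − 3/2. In particular, there are exactly 6 elliptic curves over ℂ, up to isomorphism, admitting a cyclic subgroup C of order 5 with E/C ≅ E. -/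
/-!
Put `μ = λ⁻¹`. Both `μ` and `5λ` map `L_τ` into itself, so they act on the basis `(1, τ)` by
integer matrices, of determinants `|μ|²` and `|5λ|²` with product `25`. Determinant `1` for `μ`
would give `λL_τ = L_τ ∌ g`, and determinant `25` would give `λL_τ = L_τ / 5`, which is not
`L_τ + ℤg` because `(L_τ / 5) / L_τ` is not cyclic. So if `(p q; r s)` is the matrix of `μ`, then
`ps - qr = 5` and `τ` is a root of `qX² + (p - s)X - r`, of discriminant `(p + s)² - 20`. As `τ`
lies in the fundamental domain this quadratic form may be taken reduced, and the seven reduced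
forms of these discriminants give the six values of `τ`. Conversely, with `g = (τ + j) / 5` the
pair `(g, 1)` is a basis of `L_τ + ℤg`, so `λ = cg + d` works whenever `λτ = ag + b` and
`ad - bc = 1`.
-/

noncomputable section

/-- The lattice `ℤ + ℤτ` as a subset of `ℂ`. -/
def latt (τ : ℂ) : Set ℂ := {z | ∃ m k : ℤ, z = (m : ℂ) + (k : ℂ) * τ}

/-- The additive subgroup of `ℂ` generated by the lattice `ℤ + ℤτ` and a point `g`. -/
def lattAdj (τ g : ℂ) : Set ℂ := {z | ∃ m k l : ℤ, z = (m : ℂ) + (k : ℂ) * τ + (l : ℂ) * g}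

open Complex

section Lattice

variable {τ : ℂ}

lemma int_coeffs_eq_zero (hτ : τ.im ≠ 0) {m k : ℤ} (h : (m : ℂ) + k * τ = 0) :
    m = 0 ∧ k = 0 := by
  have hk : k = 0 := by
    have him := congrArg im h
    simp only [add_im, intCast_im, mul_im, intCast_re, zero_mul, add_zero, zero_add, zero_im,
      mul_eq_zero, Int.cast_eq_zero] at him
    exact him.resolve_right hτ
  subst hk
  exact ⟨by simpa using h, rfl⟩

lemma one_mem_latt : (1 : ℂ) ∈ latt τ := ⟨1, 0, by simp⟩

lemma self_mem_latt : τ ∈ latt τ := ⟨0, 1, by simp⟩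

lemma latt_subset_lattAdj (g : ℂ) : latt τ ⊆ lattAdj τ g := by
  rintro _ ⟨m, k, rfl⟩
  exact ⟨m, k, 0, by simp⟩

lemma mem_lattAdj_self (g : ℂ) : g ∈ lattAdj τ g := ⟨0, 0, 1, by simp⟩

lemma mul_mem_latt_of_mem_lattAdj {n : ℤ} {g z : ℂ} (hg : n * g ∈ latt τ)
    (hz : z ∈ lattAdj τ g) : n * z ∈ latt τ := by
  obtain ⟨u, v, hg⟩ := hg
  obtain ⟨m, k, l, rfl⟩ := hz
  exact ⟨n * m + l * u, n * k + l * v, by push_cast; linear_combination (l : ℂ) * hg⟩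

lemma div_not_mem_latt (hτ : τ.im ≠ 0) {n : ℤ} (hn : 1 < n) (j : ℤ) :
    (τ + j) / n ∉ latt τ := by
  rintro ⟨m, k, hmk⟩
  have hn0 : (n : ℂ) ≠ 0 := by exact_mod_cast (by omega : n ≠ 0)
  rw [div_eq_iff hn0] at hmk
  obtain ⟨-, hk⟩ := int_coeffs_eq_zero hτ (m := j - n * m) (k := 1 - n * k)
    (by push_cast; linear_combination hmk)
  have := Int.eq_one_of_dvd_one (a := n) (by omega) ⟨k, by linarith⟩
  omega

lemma not_one_div_mem_lattAdj_and_div_mem_lattAdj (hτ : τ.im ≠ 0) {n : ℤ} (hn : 1 < n)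
    {g : ℂ} (hg : n * g ∈ latt τ) (h₁ : 1 / (n : ℂ) ∈ lattAdj τ g) (h₂ : τ / n ∈ lattAdj τ g) :
    False := by
  obtain ⟨u, v, hg⟩ := hg
  obtain ⟨m₁, k₁, l₁, h₁⟩ := h₁
  obtain ⟨m₂, k₂, l₂, h₂⟩ := h₂
  have hn0 : (n : ℂ) ≠ 0 := by exact_mod_cast (by omega : n ≠ 0)
  rw [div_eq_iff hn0] at h₁ h₂
  obtain ⟨e₁, e₂⟩ := int_coeffs_eq_zero hτ (m := 1 - n * m₁ - l₁ * u) (k := -(n * k₁) - l₁ * v)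
    (by push_cast; linear_combination h₁ + (l₁ : ℂ) * hg)
  obtain ⟨e₃, e₄⟩ := int_coeffs_eq_zero hτ (m := -(n * m₂) - l₂ * u) (k := 1 - n * k₂ - l₂ * v)
    (by push_cast; linear_combination h₂ + (l₂ : ℂ) * hg)
  -- reducing mod `n`, the matrix `(l₁; l₂) (u v)` of rank one would be the identity
  have hdvd : n ∣ 1 := ⟨m₁ + k₂ - n * m₁ * k₂ + n * k₁ * m₂, by
    linear_combination (1 - n * k₂) * e₁ + l₁ * u * e₄ + n * m₂ * e₂ - l₁ * v * e₃⟩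
  have := Int.eq_one_of_dvd_one (by omega) hdvd
  omega

end Lattice

section Multiplier

variable {τ : ℂ} {p q r s : ℤ}

lemma mul_adjugate (h : (p + q * τ) * τ = r + s * τ) :
    (p + q * τ) * (s - q * τ) = ((p * s - q * r : ℤ) : ℂ) ∧
      (p + q * τ) * (p * τ - r) = ((p * s - q * r : ℤ) : ℂ) * τ := by
  push_cast
  constructor
  · linear_combination -(q : ℂ) * h
  · linear_combination (p : ℂ) * h

lemma normSq_eq_det (hτ : τ.im ≠ 0) (h : (p + q * τ) * τ = r + s * τ) :
    normSq (p + q * τ) = ((p * s - q * r : ℤ) : ℝ) := by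
  have hre := congrArg re h
  have him := congrArg im h
  simp only [mul_re, mul_im, add_re, add_im, intCast_re, intCast_im, zero_mul, sub_zero,
    add_zero, zero_add] at hre him
  have hs : (s : ℝ) = p + 2 * q * τ.re := by
    apply mul_right_cancel₀ hτ
    linear_combination -him
  rw [normSq_apply]
  simp only [add_re, add_im, mul_re, mul_im, intCast_re, intCast_im, zero_mul, sub_zero,
    add_zero, zero_add]
  push_cast
  linear_combination -(q : ℝ) * hre - (p + q * τ.re) * hs

lemma exists_mul_eq_of_det_eq_one (h : (p + q * τ) * τ = r + s * τ) (hdet : p * s - q * r = 1)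
    {z : ℂ} (hz : z ∈ latt τ) : ∃ w ∈ latt τ, (p + q * τ) * w = z := by
  obtain ⟨h₁, h₂⟩ := mul_adjugate h
  rw [hdet, Int.cast_one] at h₁ h₂
  obtain ⟨m, k, rfl⟩ := hz
  refine ⟨_, ⟨m * s - k * r, k * p - m * q, rfl⟩, ?_⟩
  push_cast
  linear_combination (m : ℂ) * h₁ + (k : ℂ) * h₂

end Multiplier

section QuadraticForm

variable {τ : ℂ} {a b c : ℤ}

lemma re_normSq_of_quadratic (hτ : τ.im ≠ 0) (h : a * τ ^ 2 + b * τ + c = 0) :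
    2 * a * τ.re + b = 0 ∧ a * normSq τ = c := by
  have hre := congrArg re h
  have him := congrArg im h
  simp only [pow_two, mul_re, mul_im, add_re, add_im, intCast_re, intCast_im, zero_mul, sub_zero,
    add_zero, zero_re, zero_im] at hre him
  have hb : 2 * a * τ.re + b = 0 := by
    apply mul_right_cancel₀ hτ
    linear_combination him
  refine ⟨hb, ?_⟩
  rw [normSq_apply]
  linear_combination -hre + τ.re * hb

lemma reduced_of_quadratic (him : 0 < τ.im) (hre₁ : -(1 / 2) ≤ τ.re) (hre₂ : τ.re < 1 / 2)
    (habs : 1 ≤ ‖τ‖) (ha : 0 < a) (h : a * τ ^ 2 + b * τ + c = 0) :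
    -a < b ∧ b ≤ a ∧ a ≤ c := by
  obtain ⟨hb, hc⟩ := re_normSq_of_quadratic him.ne' h
  have haR : (0 : ℝ) < a := by exact_mod_cast ha
  have hnorm : 1 ≤ normSq τ := by
    rw [normSq_eq_norm_sq]
    nlinarith
  refine ⟨?_, ?_, ?_⟩
  · have : (-a : ℝ) < b := by nlinarith
    exact_mod_cast this
  · have : (b : ℝ) ≤ a := by nlinarith
    exact_mod_cast this
  · have : (a : ℝ) ≤ c := by nlinarith
    exact_mod_cast this

lemma exists_reduced_of_quadratic (him : 0 < τ.im) (hre₁ : -(1 / 2) ≤ τ.re)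
    (hre₂ : τ.re < 1 / 2) (habs : 1 ≤ ‖τ‖) (ha : a ≠ 0) (h : a * τ ^ 2 + b * τ + c = 0) :
    ∃ a' b' c' : ℤ, 0 < a' ∧ -a' < b' ∧ b' ≤ a' ∧ a' ≤ c' ∧
      b' ^ 2 - 4 * a' * c' = b ^ 2 - 4 * a * c ∧ a' * τ ^ 2 + b' * τ + c' = 0 := by
  rcases ha.lt_or_gt with hneg | hpos
  · have h' : ((-a : ℤ) : ℂ) * τ ^ 2 + ((-b : ℤ) : ℂ) * τ + ((-c : ℤ) : ℂ) = 0 := by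
      push_cast
      linear_combination -h
    obtain ⟨hb₁, hb₂, hc⟩ := reduced_of_quadratic him hre₁ hre₂ habs (by omega) h'
    exact ⟨-a, -b, -c, by omega, hb₁, hb₂, hc, by ring, h'⟩
  · obtain ⟨hb₁, hb₂, hc⟩ := reduced_of_quadratic him hre₁ hre₂ habs hpos h
    exact ⟨a, b, c, hpos, hb₁, hb₂, hc, rfl, h⟩

lemma reduced_forms_of_disc_eq_sq_sub_twenty {t : ℤ} (ha : 0 < a) (hb₁ : -a < b) (hb₂ : b ≤ a)
    (hc : a ≤ c) (hdisc : b ^ 2 - 4 * a * c = t ^ 2 - 20) :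
    (a = 1 ∧ b = 0 ∧ c = 1) ∨ (a = 1 ∧ b = 0 ∧ c = 4) ∨ (a = 1 ∧ b = 0 ∧ c = 5) ∨
      (a = 1 ∧ b = 1 ∧ c = 3) ∨ (a = 1 ∧ b = 1 ∧ c = 5) ∨
      (a = 2 ∧ b = 0 ∧ c = 2) ∨ (a = 2 ∧ b = 2 ∧ c = 3) := by
  have hb : b ^ 2 ≤ a ^ 2 := by nlinarith
  have ha₂ : a ≤ 2 := by nlinarith
  have ht : -4 ≤ t ∧ t ≤ 4 := by constructor <;> nlinarith
  obtain ⟨ht₁, ht₂⟩ := ht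
  interval_cases a <;> interval_cases b <;> interval_cases t <;> omega

lemma sq_cases_of_reduced {t : ℤ} (ha : 0 < a) (hb₁ : -a < b) (hb₂ : b ≤ a) (hc : a ≤ c)
    (hdisc : b ^ 2 - 4 * a * c = t ^ 2 - 20) (h : a * τ ^ 2 + b * τ + c = 0) :
    τ ^ 2 = -1 ∨ τ ^ 2 = -4 ∨ τ ^ 2 = -5 ∨ τ ^ 2 = -τ - 3 ∨ τ ^ 2 = -τ - 5 ∨
      τ ^ 2 = -τ - 3 / 2 := by
  rcases reduced_forms_of_disc_eq_sq_sub_twenty ha hb₁ hb₂ hc hdisc with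
    ⟨rfl, rfl, rfl⟩ | ⟨rfl, rfl, rfl⟩ | ⟨rfl, rfl, rfl⟩ | ⟨rfl, rfl, rfl⟩ | ⟨rfl, rfl, rfl⟩ |
    ⟨rfl, rfl, rfl⟩ | ⟨rfl, rfl, rfl⟩ <;> push_cast at h
  · exact Or.inl (by linear_combination h)
  · exact Or.inr <| Or.inl (by linear_combination h)
  · exact Or.inr <| Or.inr <| Or.inl (by linear_combination h)
  · exact Or.inr <| Or.inr <| Or.inr <| Or.inl (by linear_combination h)
  · exact Or.inr <| Or.inr <| Or.inr <| Or.inr <| Or.inl (by linear_combination h)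
  · exact Or.inl (by linear_combination h / 2)
  · exact Or.inr <| Or.inr <| Or.inr <| Or.inr <| Or.inr (by linear_combination h / 2)

end QuadraticForm

section Isogeny

variable {τ : ℂ}

lemma sq_cases_of_det_eq_five (him : 0 < τ.im) (hre₁ : -(1 / 2) ≤ τ.re) (hre₂ : τ.re < 1 / 2)
    (habs : 1 ≤ ‖τ‖) {p q r s : ℤ} (h : (p + q * τ) * τ = r + s * τ) (hdet : p * s - q * r = 5) :
    τ ^ 2 = -1 ∨ τ ^ 2 = -4 ∨ τ ^ 2 = -5 ∨ τ ^ 2 = -τ - 3 ∨ τ ^ 2 = -τ - 5 ∨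
      τ ^ 2 = -τ - 3 / 2 := by
  have hq : q ≠ 0 := by
    rintro rfl
    obtain ⟨hr, hps⟩ := int_coeffs_eq_zero him.ne' (m := -r) (k := p - s)
      (by push_cast; linear_combination h)
    have hp : p * p = 5 := by rw [show s = p by omega] at hdet; linarith
    have : p ≤ 2 := by nlinarith
    have : -2 ≤ p := by nlinarith
    interval_cases p <;> omega
  obtain ⟨a, b, c, ha, hb₁, hb₂, hc, hdisc, hquad⟩ :=
    exists_reduced_of_quadratic him hre₁ hre₂ habs hq (b := p - s) (c := -r)
      (by push_cast; linear_combination h)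
  exact sq_cases_of_reduced ha hb₁ hb₂ hc (t := p + s) (by rw [hdisc]; linear_combination -4 * hdet)
    hquad

lemma exists_det_eq_five_of_image_eq_lattAdj (hτ : τ.im ≠ 0) {g lam : ℂ} (hg : g ∉ latt τ)
    (h5g : (5 : ℂ) * g ∈ latt τ) (heq : (fun x => lam * x) '' latt τ = lattAdj τ g) :
    ∃ p q r s : ℤ, (p + q * τ) * τ = r + s * τ ∧ p * s - q * r = 5 := by
  have hsurj : ∀ z ∈ lattAdj τ g, ∃ w ∈ latt τ, lam * w = z := fun z hz => by
    rwa [← heq] at hz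
  have h5 : ∀ z ∈ latt τ, ((5 : ℤ) : ℂ) * (lam * z) ∈ latt τ := fun z hz =>
    mul_mem_latt_of_mem_lattAdj (by exact_mod_cast h5g) (by rw [← heq]; exact ⟨z, hz, rfl⟩)
  obtain ⟨_, ⟨p, q, rfl⟩, hμ⟩ := hsurj 1 (latt_subset_lattAdj g one_mem_latt)
  obtain ⟨_, ⟨r, s, rfl⟩, hμτ⟩ := hsurj τ (latt_subset_lattAdj g self_mem_latt)
  obtain ⟨A, B, hA⟩ := h5 1 one_mem_latt
  obtain ⟨C, D, hC⟩ := h5 τ self_mem_latt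
  have hM : (p + q * τ) * τ = r + s * τ := by
    linear_combination (r + s * τ) * hμ - (p + q * τ) * hμτ
  have hN : (A + B * τ) * τ = C + D * τ := by rw [← hA, ← hC]; ring
  -- `(p + qτ)(A + Bτ) = 5λμ = 5`, and the determinants are the norms of these factors
  have hdet : (p * s - q * r) * (A * D - B * C) = 25 := by
    have h25 := congrArg normSq (show (p + q * τ) * (A + B * τ) = 5 by
      rw [← hA]; push_cast; linear_combination 5 * hμ)
    rw [normSq_mul, normSq_eq_det hτ hM, normSq_eq_det hτ hN, normSq_ofNat] at h25
    exact_mod_cast h25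
  have hpos : 0 < p * s - q * r := by
    have := normSq_pos.2 (left_ne_zero_of_mul_eq_one (mul_comm lam _ ▸ hμ))
    rw [normSq_eq_det hτ hM] at this
    exact_mod_cast this
  obtain hdet₁ | hdet₅ | hdet₂₅ : p * s - q * r = 1 ∨ p * s - q * r = 5 ∨ p * s - q * r = 25 := by
    have : p * s - q * r ≤ 25 := Int.le_of_dvd (by norm_num) ⟨_, hdet.symm⟩
    generalize p * s - q * r = d at hdet hpos this
    interval_cases d <;> omega
  · obtain ⟨_, ⟨m, k, rfl⟩, rfl⟩ := hsurj g (mem_lattAdj_self g)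
    obtain ⟨w, hw, hμw⟩ := exists_mul_eq_of_det_eq_one hM hdet₁ ⟨m, k, rfl⟩
    refine absurd ?_ hg
    rwa [← hμw, ← mul_assoc, hμ, one_mul]
  · exact ⟨p, q, r, s, hM, hdet₅⟩
  · -- `5λ` has determinant `1`, so `λ L_τ` contains `L_τ / 5`
    have hdetN : A * D - B * C = 1 := by rw [hdet₂₅] at hdet; omega
    have hdiv : ∀ z ∈ latt τ, z / ((5 : ℤ) : ℂ) ∈ lattAdj τ g := fun z hz => by
      obtain ⟨w, hw, hNw⟩ := exists_mul_eq_of_det_eq_one hN hdetN hz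
      rw [← heq]
      refine ⟨w, hw, ?_⟩
      rw [eq_div_iff (by norm_num), ← hNw, ← hA]
      ring
    exact (not_one_div_mem_lattAdj_and_div_mem_lattAdj hτ (by norm_num) (by exact_mod_cast h5g)
      (hdiv 1 one_mem_latt) (hdiv τ self_mem_latt)).elim

lemma image_latt_eq_lattAdj {n j a b c d : ℤ} {g lam : ℂ} (hg : n * g = τ + j)
    (hlam : lam = c * g + d) (hlamτ : lam * τ = a * g + b) (hdet : a * d - b * c = 1) :
    (fun x => lam * x) '' latt τ = lattAdj τ g := by
  have hdetC : (a : ℂ) * d - b * c = 1 := by exact_mod_cast hdet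
  ext z
  constructor
  · rintro ⟨_, ⟨m, k, rfl⟩, rfl⟩
    exact ⟨m * d + k * b, 0, m * c + k * a, by
      push_cast; linear_combination (m : ℂ) * hlam + (k : ℂ) * hlamτ⟩
  · rintro ⟨m, k, l, rfl⟩
    -- `m + kτ + lg = X + Yg` with `X = m - jk`, `Y = nk + l`; invert the matrix `(a b; c d)`
    refine ⟨_, ⟨a * (m - j * k) - b * (n * k + l), d * (n * k + l) - c * (m - j * k), rfl⟩, ?_⟩
    push_cast
    linear_combination (a * (m - j * k) - b * (n * k + l) : ℂ) * hlam +
      (d * (n * k + l) - c * (m - j * k) : ℂ) * hlamτ +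
      (m - j * k + (n * k + l) * g : ℂ) * hdetC + (k : ℂ) * hg

lemma exists_image_eq_lattAdj (hτ : τ.im ≠ 0) {n : ℤ} (hn : 1 < n) (j a b c d : ℤ)
    (hdet : a * d - b * c = 1) (h : (c * ((τ + j) / n) + d) * τ = a * ((τ + j) / n) + b) :
    ∃ g lam : ℂ, g ∉ latt τ ∧ (n : ℂ) * g ∈ latt τ ∧
      (fun x => lam * x) '' latt τ = lattAdj τ g := by
  have hn0 : (n : ℂ) ≠ 0 := by exact_mod_cast (by omega : n ≠ 0)
  have hg : (n : ℂ) * ((τ + j) / n) = τ + j := mul_div_cancel₀ _ hn0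
  exact ⟨_, _, div_not_mem_latt hτ hn j, ⟨j, 1, by rw [hg]; ring⟩,
    image_latt_eq_lattAdj hg rfl h hdet⟩

end Isogeny

theorem stmt_18 (τ : ℂ) (him : 0 < τ.im) (hre₁ : -(1 / 2) ≤ τ.re) (hre₂ : τ.re < 1 / 2)
    (habs : 1 ≤ ‖τ‖) :
    (∃ g lam : ℂ, g ∉ latt τ ∧ (5 : ℂ) * g ∈ latt τ ∧
        (fun x => lam * x) '' latt τ = lattAdj τ g) ↔
    (τ ^ 2 = -1 ∨ τ ^ 2 = -4 ∨ τ ^ 2 = -5 ∨ τ ^ 2 = -τ - 3 ∨ τ ^ 2 = -τ - 5 ∨ τ ^ 2 = -τ - 3 / 2) := by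
  constructor
  · rintro ⟨g, lam, hg, h5g, heq⟩
    obtain ⟨p, q, r, s, hM, hdet⟩ := exists_det_eq_five_of_image_eq_lattAdj him.ne' hg h5g heq
    exact sq_cases_of_det_eq_five him hre₁ hre₂ habs hM hdet
  · have key := exists_image_eq_lattAdj him.ne' (n := 5) (by norm_num)
    push_cast at key
    rintro (h | h | h | h | h | h)
    · exact key 2 2 (-1) 1 0 (by norm_num) (by push_cast; linear_combination h / 5)
    · exact key 1 1 (-1) 1 0 (by norm_num) (by push_cast; linear_combination h / 5)
    · exact key 0 0 (-1) 1 0 (by norm_num) (by push_cast; linear_combination h / 5)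
    · exact key 2 1 (-1) 1 0 (by norm_num) (by push_cast; linear_combination h / 5)
    · exact key 0 (-1) (-1) 1 0 (by norm_num) (by push_cast; linear_combination h / 5)
    · exact key (-2) (-1) (-1) 2 1 (by norm_num) (by push_cast; linear_combination 2 * h / 5)
end
end

section
/- Let τ ∈ ℂ with Im τ > 0 and L_τ = {m + k·τ : m, k ∈ ℤ}, let n ≥ 1 be an integer, and let U = [[u₁₁, u₁₂],[u₂₁, u₂₂]] be a 2×2 integer matrix with det U = ±1 (i.e. U ∈ GL₂(ℤ)). Let s', t' be integers with gcd(s', n) = 1, and set α₁ = u₁₁·s' + n·u₁₂·t', α₂ = u₂₁·s' + n·u₂₂·t', and g = (α₁ + α₂·τ)/n. Then L_τ + ℤ·g = L_τ + ℤ·((u₁₁ + u₂₁·τ)/n); in particular, the cyclic subgroup of ℂ/L_τ generated by the coset of g equals the cyclic subgroup generated by the coset of (u₁₁ + u₂₁·τ)/n, and it has order exactly n. -/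
noncomputable section

theorem stmt_19 (τ : ℂ) (hτ : 0 < τ.im) (n : ℕ) (hn : 1 ≤ n)
    (u11 u12 u21 u22 : ℤ)
    (hU : u11 * u22 - u12 * u21 = 1 ∨ u11 * u22 - u12 * u21 = -1)
    (s' t' : ℤ) (hs : Int.gcd s' (n : ℤ) = 1) :
    lattAdj τ ((((u11 * s' + (n : ℤ) * u12 * t' : ℤ) : ℂ) +
        ((u21 * s' + (n : ℤ) * u22 * t' : ℤ) : ℂ) * τ) / (n : ℂ)) =
      lattAdj τ (((u11 : ℂ) + (u21 : ℂ) * τ) / (n : ℂ)) ∧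
    (n : ℂ) * (((u11 : ℂ) + (u21 : ℂ) * τ) / (n : ℂ)) ∈ latt τ ∧
    (∀ m : ℕ, 0 < m → m < n → (m : ℂ) * (((u11 : ℂ) + (u21 : ℂ) * τ) / (n : ℂ)) ∉ latt τ) := by
  have hn0 : (n : ℂ) ≠ 0 := by
    exact_mod_cast Nat.cast_ne_zero.mpr (by omega)
  -- Bezout for s' and n
  obtain ⟨a, b, hab⟩ : ∃ a b : ℤ, s' * a + (n : ℤ) * b = 1 := by
    refine ⟨Int.gcdA s' (n : ℤ), Int.gcdB s' (n : ℤ), ?_⟩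
    have := Int.gcd_eq_gcd_ab s' (n : ℤ)
    omega
  refine ⟨?_, ?_, ?_⟩
  · ext z
    constructor
    · rintro ⟨m, k, l, rfl⟩
      refine ⟨m + l * u12 * t', k + l * u22 * t', l * s', ?_⟩
      push_cast
      field_simp
      ring
    · rintro ⟨m, k, l, rfl⟩
      refine ⟨m + l * (b * u11 - a * u12 * t'), k + l * (b * u21 - a * u22 * t'), l * a, ?_⟩
      have habC : (s' : ℂ) * a + (n : ℂ) * b = 1 := by exact_mod_cast congrArg (Int.cast : ℤ → ℂ) hab
      push_cast
      field_simp
      linear_combination (-(l : ℂ) * ((u11 : ℂ) + (u21 : ℂ) * τ)) * habC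
  · refine ⟨u11, u21, ?_⟩
    field_simp
  · rintro m hm0 hmn ⟨p, q, hpq⟩
    have hτ0 : τ.im ≠ 0 := ne_of_gt hτ
    have E : (m : ℂ) * u11 + (m : ℂ) * u21 * τ = (n : ℂ) * p + (n : ℂ) * q * τ := by
      field_simp at hpq
      linear_combination hpq
    have Eim := congrArg Complex.im E
    simp [Complex.add_im, Complex.mul_im] at Eim
    rcases Eim with Eim | Eim
    swap
    · exact hτ0 Eim
    have h1 : (m : ℤ) * u21 = (n : ℤ) * q := by exact_mod_cast Eim
    have Ere := congrArg Complex.re E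
    simp [Complex.add_re, Complex.mul_re] at Ere
    have h2 : (m : ℤ) * u11 = (n : ℤ) * p := by
      have h1R : ((m : ℝ)) * u21 = ((n : ℝ)) * q := by exact_mod_cast h1
      have : ((m : ℤ) * u11 : ℝ) = ((n : ℤ) * p : ℝ) := by
        push_cast
        linear_combination Ere - τ.re * h1R
      exact_mod_cast this
    -- coprimality of u11 u21
    obtain ⟨x, y, hxy⟩ : ∃ x y : ℤ, x * u11 + y * u21 = 1 := by
      rcases hU with h | h
      · exact ⟨u22, -u12, by linarith⟩
      · exact ⟨-u22, u12, by linarith⟩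
    have hdvd : (n : ℤ) ∣ (m : ℤ) := by
      have : (m : ℤ) = x * ((m : ℤ) * u11) + y * ((m : ℤ) * u21) := by
        linear_combination (-(m : ℤ)) * hxy
      rw [this, h1, h2]
      exact Dvd.dvd.add (Dvd.dvd.mul_left ⟨p, rfl⟩ x) (Dvd.dvd.mul_left ⟨q, rfl⟩ y)
    have : (n : ℤ) ≤ (m : ℤ) := Int.le_of_dvd (by exact_mod_cast hm0) hdvd
    omega
end
end
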